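/- Let 1/n ≪ ε ≪ 1 and let k ≤ 2εn be a positive integer. Let G be a strongly edge-colored graph on n vertices with δ(G) ≥ k/2 and Δ(G) ≤ εn. If G contains no rainbow matching of size k, then G uses exactly k − 1 colors. -/

import Mathlib

open SimpleGraph

def StronglyEdgeColored {V C : Type*} (G : SimpleGraph V) (c : Sym2 V → C) : Prop :=
  ∀ a b x y : V, G.Adj a b → G.Adj x y → c s(a, b) = c s(x, y) →
    s(a, b) = s(x, y) ∨
      (a ≠ x ∧ a ≠ y ∧ b ≠ x ∧ b ≠ y ∧
        ¬G.Adj a x ∧ ¬G.Adj a y ∧ ¬G.Adj b x ∧ ¬G.Adj b y)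

/-- `G` contains a rainbow matching with `k` edges. -/
def HasRainbowMatching {V C : Type*} (G : SimpleGraph V) (c : Sym2 V → C) (k : ℕ) : Prop :=
  ∃ M : G.Subgraph, M.IsMatching ∧ M.edgeSet.ncard = k ∧ Set.InjOn c M.edgeSet

/-
Each colour class is an induced matching, so the colours at a vertex are distinct and adjacent
vertices `u`, `v` share only the colour of `uv`; hence `k ≤ d(u) + d(v) ≤ |colours at u or v| + 1`,
which already gives at least `k - 1` colours.

Call a colour big if its class has at least `2k - 1` edges. A matching with fewer than `k` edges
meets at most `2k - 2` edges of such a class, so big colours can be added greedily: if `Q` is a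
maximal rainbow matching in the small colours and `b` is the number of big colours, then
`|Q| + b < k`. Suppose `Q ≠ ∅`, and let `σ(u)` be the number of small colours at `u`. By the
inequality above every edge has an endpoint with `|Q| ≤ 2 σ(u)`. A small colour at a vertex outside
`V(Q)` is a colour of `Q` or leads into `V(Q)`; so such vertices have degree at most `3k`, and their
`σ` sum to at most `4k|Q| + ∑_{x ∈ V(Q)} d(x)`. With `Δ ≤ n/1000` and `k ≤ n/500`, the vertices with
`|Q| ≤ 2 σ(u)` then cover far fewer than the `nk/4` edges of `G`. So `Q = ∅`, every colour is big,
and there are at most `b < k` colours.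
-/

open Finset

variable {V C : Type*}

namespace StronglyEdgeColored

variable {G : SimpleGraph V} {c : Sym2 V → C}

theorem eq_of_color_eq (hs : StronglyEdgeColored G c) {u a b : V} (ha : G.Adj u a)
    (hb : G.Adj u b) (h : c s(u, a) = c s(u, b)) : a = b := by
  rcases hs u a u b ha hb h with h | h
  · exact Sym2.congr_right.mp h
  · exact absurd rfl h.1

theorem eq_of_adj_of_color_eq (hs : StronglyEdgeColored G c) {u v a b : V} (huv : G.Adj u v)
    (ha : G.Adj u a) (hb : G.Adj v b) (h : c s(u, a) = c s(v, b)) : a = v := by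
  rcases hs u a v b ha hb h with h | h
  · rcases Sym2.eq_iff.mp h with ⟨rfl, -⟩ | ⟨-, rfl⟩
    · exact absurd huv (G.loopless.irrefl u)
    · rfl
  · exact absurd huv h.2.2.2.2.1

theorem eq_of_mem_of_color_eq (hs : StronglyEdgeColored G c) {e f : Sym2 V} {x : V}
    (he : e ∈ G.edgeSet) (hf : f ∈ G.edgeSet) (h : c e = c f) (hxe : x ∈ e) (hxf : x ∈ f) :
    e = f := by
  induction e using Sym2.ind with | _ a b =>
  induction f using Sym2.ind with | _ p r =>
  rcases hs a b p r he hf h with h | ⟨hap, har, hbp, hbr, -⟩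
  · exact h
  · rcases Sym2.mem_iff.mp hxe with rfl | rfl <;> rcases Sym2.mem_iff.mp hxf with rfl | rfl <;>
      contradiction

end StronglyEdgeColored

section Degrees

variable [Fintype V] {G : SimpleGraph V} [DecidableRel G.Adj]

theorem sum_card_filter_adj (S : Finset V) :
    ∑ u, #{w ∈ S | G.Adj u w} = ∑ x ∈ S, G.degree x := by
  refine (sum_card_bipartiteAbove_eq_sum_card_bipartiteBelow G.Adj).trans
    (sum_congr rfl fun x _ => ?_)
  rw [← card_neighborFinset_eq_degree, neighborFinset_eq_filter]
  simp [bipartiteBelow, G.adj_comm]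

theorem card_edgeFinset_le_sum_degree [DecidableEq V] {X : Finset V}
    (hX : ∀ u v, G.Adj u v → u ∈ X ∨ v ∈ X) : #G.edgeFinset ≤ ∑ x ∈ X, G.degree x := by
  calc #G.edgeFinset ≤ #(X.biUnion fun x => G.incidenceFinset x) := card_le_card fun e he => by
        induction e using Sym2.ind with | _ u v =>
        have huv := mem_edgeFinset.mp he
        rw [mem_biUnion]
        rcases hX u v huv with hu | hv
        · exact ⟨u, hu, (G.mem_incidenceFinset _ _).mpr ⟨huv, Sym2.mem_mk_left _ _⟩⟩
        · exact ⟨v, hv, (G.mem_incidenceFinset _ _).mpr ⟨huv, Sym2.mem_mk_right _ _⟩⟩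
    _ ≤ ∑ x ∈ X, #(G.incidenceFinset x) := card_biUnion_le
    _ = ∑ x ∈ X, G.degree x := by simp_rw [card_incidenceFinset_eq_degree]

theorem card_mul_le_four_mul_sum_degree [DecidableEq V] {k : ℕ} (hδ : ∀ v, k ≤ 2 * G.degree v)
    {X : Finset V} (hX : ∀ u v, G.Adj u v → u ∈ X ∨ v ∈ X) :
    Fintype.card V * k ≤ 4 * ∑ x ∈ X, G.degree x :=
  calc Fintype.card V * k = ∑ _v : V, k := by rw [sum_const, card_univ, smul_eq_mul]
    _ ≤ ∑ v, 2 * G.degree v := sum_le_sum fun v _ => hδ v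
    _ = 4 * #G.edgeFinset := by rw [← mul_sum, sum_degrees_eq_twice_card_edges]; ring
    _ ≤ 4 * ∑ x ∈ X, G.degree x := by gcongr; exact card_edgeFinset_le_sum_degree hX

end Degrees

section Colors

variable [Fintype V] [DecidableEq C] (G : SimpleGraph V) [DecidableRel G.Adj] (c : Sym2 V → C)

def colorsAt (v : V) : Finset C :=
  (G.neighborFinset v).image fun w => c s(v, w)

def colorClass (γ : C) : Finset (Sym2 V) :=
  {e ∈ G.edgeFinset | c e = γ}

variable {G c}

@[simp]
theorem mem_colorClass {γ : C} {e : Sym2 V} :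
    e ∈ colorClass G c γ ↔ e ∈ G.edgeSet ∧ c e = γ := by
  simp [colorClass]

theorem mem_colorsAt {v : V} {γ : C} : γ ∈ colorsAt G c v ↔ ∃ w, G.Adj v w ∧ c s(v, w) = γ := by
  simp [colorsAt]

theorem colorsAt_subset_image (v : V) : colorsAt G c v ⊆ G.edgeFinset.image c := by
  intro γ hγ
  obtain ⟨w, hvw, rfl⟩ := mem_colorsAt.mp hγ
  exact mem_image_of_mem c (mem_edgeFinset.mpr hvw)

theorem card_colorsAt (hs : StronglyEdgeColored G c) (v : V) :
    #(colorsAt G c v) = G.degree v := by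
  rw [colorsAt, card_image_of_injOn, card_neighborFinset_eq_degree]
  intro a ha b hb hab
  exact hs.eq_of_color_eq ((mem_neighborFinset _ _ _).mp ha) ((mem_neighborFinset _ _ _).mp hb) hab

theorem card_colorsAt_inter_le_one (hs : StronglyEdgeColored G c) {u v : V} (huv : G.Adj u v) :
    #(colorsAt G c u ∩ colorsAt G c v) ≤ 1 := by
  refine card_le_card (t := {c s(u, v)}) (fun γ hγ => ?_) |>.trans_eq (card_singleton _)
  obtain ⟨a, hua, rfl⟩ := mem_colorsAt.mp (mem_inter.mp hγ).1
  obtain ⟨b, hvb, hb⟩ := mem_colorsAt.mp (mem_inter.mp hγ).2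
  rw [mem_singleton, hs.eq_of_adj_of_color_eq huv hua hvb hb.symm]

theorem degree_add_degree_le (hs : StronglyEdgeColored G c) {u v : V} (huv : G.Adj u v) :
    G.degree u + G.degree v ≤ #(colorsAt G c u ∪ colorsAt G c v) + 1 := by
  rw [← card_colorsAt hs, ← card_colorsAt hs, ← card_union_add_card_inter]
  exact Nat.add_le_add_left (card_colorsAt_inter_le_one hs huv) _

theorem le_card_image_edgeFinset_add_one [Nonempty V] {k : ℕ} (hs : StronglyEdgeColored G c)
    (hδ : ∀ v, k ≤ 2 * G.degree v) : k ≤ #(G.edgeFinset.image c) + 1 := by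
  obtain ⟨v⟩ := ‹Nonempty V›
  obtain h0 | hdeg := Nat.eq_zero_or_pos (G.degree v)
  · have := hδ v
    omega
  obtain ⟨u, hu⟩ := card_pos.mp (G.card_neighborFinset_eq_degree v ▸ hdeg)
  have huv := (mem_neighborFinset _ _ _).mp hu
  calc k ≤ G.degree v + G.degree u := by have := hδ v; have := hδ u; omega
    _ ≤ #(colorsAt G c v ∪ colorsAt G c u) + 1 := degree_add_degree_le hs huv
    _ ≤ #(G.edgeFinset.image c) + 1 := by
      gcongr
      exact union_subset (colorsAt_subset_image v) (colorsAt_subset_image u)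

end Colors

section Matchings

variable (G : SimpleGraph V) (c : Sym2 V → C)

structure IsRainbowMatching (M : Finset (Sym2 V)) : Prop where
  subset_edgeSet : ↑M ⊆ G.edgeSet
  eq_of_mem : ∀ ⦃v : V⦄ ⦃e f : Sym2 V⦄, e ∈ M → f ∈ M → v ∈ e → v ∈ f → e = f
  injOn : Set.InjOn c M

variable {G c}

theorem IsRainbowMatching.empty : IsRainbowMatching G c ∅ :=
  ⟨by simp, by simp, by simp⟩

theorem IsRainbowMatching.mono {M N : Finset (Sym2 V)} (hM : IsRainbowMatching G c M)
    (hNM : N ⊆ M) : IsRainbowMatching G c N :=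
  ⟨(coe_subset.mpr hNM).trans hM.subset_edgeSet,
    fun _ _ _ he hf => hM.eq_of_mem (hNM he) (hNM hf), hM.injOn.mono (coe_subset.mpr hNM)⟩

theorem IsRainbowMatching.hasRainbowMatching {M : Finset (Sym2 V)}
    (hM : IsRainbowMatching G c M) : HasRainbowMatching G c #M := by
  let H : G.Subgraph :=
    { verts := {v | ∃ e ∈ M, v ∈ e}
      Adj := fun u v => s(u, v) ∈ M
      adj_sub := fun h => hM.subset_edgeSet h
      edge_vert := fun h => ⟨_, h, Sym2.mem_mk_left _ _⟩
      symm := ⟨fun u v h => by rwa [Sym2.eq_swap]⟩ }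
  have hH : H.edgeSet = ↑M := by
    ext e
    induction e using Sym2.ind with | _ u v => rfl
  refine ⟨H, fun v ⟨e, he, hve⟩ => ?_, by rw [hH, Set.ncard_coe_finset], hH ▸ hM.injOn⟩
  refine ⟨Sym2.Mem.other hve, show s(v, _) ∈ M from (Sym2.other_spec hve).symm ▸ he,
    fun w hw => ?_⟩
  have := hM.eq_of_mem hw (Sym2.other_spec hve ▸ he) (Sym2.mem_mk_left v w)
    (Sym2.mem_mk_left _ _)
  exact Sym2.congr_right.mp this

theorem IsRainbowMatching.hasRainbowMatching_of_le {M : Finset (Sym2 V)} {k : ℕ}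
    (hM : IsRainbowMatching G c M) (hk : k ≤ #M) : HasRainbowMatching G c k := by
  obtain ⟨N, hNM, rfl⟩ := exists_subset_card_eq hk
  exact (hM.mono hNM).hasRainbowMatching

variable [DecidableEq V]

def vertsOf (M : Finset (Sym2 V)) : Finset V :=
  M.biUnion Sym2.toFinset

theorem mem_vertsOf {M : Finset (Sym2 V)} {v : V} : v ∈ vertsOf M ↔ ∃ e ∈ M, v ∈ e := by
  simp [vertsOf]

theorem card_vertsOf_le (M : Finset (Sym2 V)) : #(vertsOf M) ≤ 2 * #M := by
  rw [mul_comm]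
  refine card_biUnion_le_card_mul _ _ _ fun e _ => ?_
  rw [Sym2.card_toFinset]
  split_ifs <;> omega

@[simp]
theorem vertsOf_empty : vertsOf (∅ : Finset (Sym2 V)) = ∅ := by
  simp [vertsOf]

theorem IsRainbowMatching.insert [DecidableEq C] {M : Finset (Sym2 V)} {e : Sym2 V}
    (hM : IsRainbowMatching G c M) (he : e ∈ G.edgeSet) (hfree : ∀ v ∈ e, v ∉ vertsOf M)
    (hcolor : c e ∉ M.image c) : IsRainbowMatching G c (insert e M) := by
  have hdisj : ∀ {v f}, f ∈ M → v ∈ e → v ∉ f := fun hf hve hvf =>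
    hfree _ hve (mem_vertsOf.mpr ⟨_, hf, hvf⟩)
  have heM : e ∉ M := fun h => hcolor (mem_image_of_mem c h)
  refine ⟨?_, ?_, ?_⟩
  · rw [coe_insert]
    exact Set.insert_subset he hM.subset_edgeSet
  · intro v f f' hf hf' hvf hvf'
    rcases mem_insert.mp hf with hfe | hf <;> rcases mem_insert.mp hf' with hfe' | hf'
    · rw [hfe, hfe']
    · exact absurd hvf' (hdisj hf' (hfe ▸ hvf))
    · exact absurd hvf (hdisj hf (hfe' ▸ hvf'))
    · exact hM.eq_of_mem hf hf' hvf hvf'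
  · rw [coe_insert, Set.injOn_insert (mem_coe.not.mpr heM)]
    refine ⟨hM.injOn, fun ⟨f, hf, hcf⟩ => hcolor ?_⟩
    exact mem_image.mpr ⟨f, hf, hcf⟩

end Matchings

section Greedy

variable [Fintype V] [DecidableEq V] [DecidableEq C] {G : SimpleGraph V} [DecidableRel G.Adj]
  {c : Sym2 V → C}

theorem exists_mem_colorClass_forall_notMem_vertsOf (hs : StronglyEdgeColored G c)
    (M : Finset (Sym2 V)) {γ : C} (h : 2 * #M < #(colorClass G c γ)) :
    ∃ e ∈ colorClass G c γ, ∀ v ∈ e, v ∉ vertsOf M := by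
  by_contra! hall
  have : #(colorClass G c γ) ≤ #(vertsOf M) := by
    refine card_le_card_of_forall_subsingleton (fun e v => v ∈ e)
      (fun e he => (hall e he).imp fun v hv => ⟨hv.2, hv.1⟩) fun v _ e he f hf => ?_
    have he' := mem_colorClass.mp he.1
    have hf' := mem_colorClass.mp hf.1
    exact hs.eq_of_mem_of_color_eq he'.1 hf'.1 (he'.2.trans hf'.2.symm) he.2 hf.2
  have := card_vertsOf_le M
  omega

theorem exists_isRainbowMatching_card_eq_add (hs : StronglyEdgeColored G c)
    {M : Finset (Sym2 V)} (hM : IsRainbowMatching G c M) (B : Finset C)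
    (hMB : ∀ e ∈ M, c e ∉ B) (hB : ∀ γ ∈ B, 2 * (#M + #B) ≤ #(colorClass G c γ) + 1) :
    ∃ M', IsRainbowMatching G c M' ∧ #M' = #M + #B := by
  induction B using Finset.induction_on generalizing M with
  | empty => exact ⟨M, hM, rfl⟩
  | insert γ B hγB ih =>
    simp only [card_insert_of_notMem hγB] at hB ⊢
    obtain ⟨e, he, hfree⟩ := exists_mem_colorClass_forall_notMem_vertsOf hs M (γ := γ)
      (by have := hB γ (mem_insert_self _ _); omega)
    rw [mem_colorClass] at he
    have hcolor : c e ∉ M.image c := fun h => by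
      obtain ⟨f, hf, hcf⟩ := mem_image.mp h
      exact hMB f hf (hcf ▸ he.2 ▸ mem_insert_self _ _)
    have heM : e ∉ M := fun h => hcolor (mem_image_of_mem c h)
    have hMB' : ∀ f ∈ insert e M, c f ∉ B := fun f hf => by
      rcases mem_insert.mp hf with rfl | hf
      · exact he.2 ▸ hγB
      · exact fun h => hMB f hf (mem_insert_of_mem h)
    obtain ⟨M', hM', hcard⟩ := ih (hM.insert he.1 hfree hcolor) hMB' fun γ' hγ' => by
      rw [card_insert_of_notMem heM]
      have := hB γ' (mem_insert_of_mem hγ')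
      omega
    exact ⟨M', hM', by rw [hcard, card_insert_of_notMem heM]; ring⟩

variable (G c) in
/-- The colours with at least `2k - 1` edges (stated without truncated subtraction): a matching of
fewer than `k` edges always misses some edge of such a colour. -/
def bigColors (k : ℕ) : Finset C :=
  {γ ∈ G.edgeFinset.image c | 2 * k ≤ #(colorClass G c γ) + 1}

theorem IsRainbowMatching.card_add_card_bigColors_lt (hs : StronglyEdgeColored G c) {k : ℕ}
    (hNR : ¬HasRainbowMatching G c k) {M : Finset (Sym2 V)} (hM : IsRainbowMatching G c M)
    (hsmall : ∀ e ∈ M, c e ∉ bigColors G c k) : #M + #(bigColors G c k) < k := by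
  by_contra! h
  obtain ⟨B, hB, hBcard⟩ := exists_subset_card_eq (show k - #M ≤ #(bigColors G c k) by omega)
  obtain ⟨M', hM', hcard⟩ := exists_isRainbowMatching_card_eq_add hs hM B
    (fun e he hB' => hsmall e he (hB hB')) fun γ hγ => by
      have := (mem_filter.mp (hB hγ)).2
      have := card_pos.mpr ⟨γ, hγ⟩
      omega
  exact hNR (hM'.hasRainbowMatching_of_le (by omega))

theorem exists_maximal_isRainbowMatching (p : C → Prop) :
    ∃ M, IsRainbowMatching G c M ∧ (∀ e ∈ M, p (c e)) ∧
      ∀ e ∈ G.edgeSet, p (c e) → (∀ v ∈ e, v ∉ vertsOf M) → c e ∈ M.image c := by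
  classical
  obtain ⟨M, hM, hmax⟩ := exists_max_image
    {M ∈ G.edgeFinset.powerset | IsRainbowMatching G c M ∧ ∀ e ∈ M, p (c e)} card
    ⟨∅, by simp [IsRainbowMatching.empty]⟩
  obtain ⟨hME, hMr, hMp⟩ := mem_filter.mp hM
  refine ⟨M, hMr, hMp, fun e he hpe hfree => ?_⟩
  by_contra hcolor
  have heM : e ∉ M := fun h => hcolor (mem_image_of_mem c h)
  have := hmax (insert e M) <| mem_filter.mpr
    ⟨mem_powerset.mpr <| insert_subset (mem_edgeFinset.mpr he) (mem_powerset.mp hME),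
      hMr.insert he hfree hcolor, by simpa [hpe] using hMp⟩
  rw [card_insert_of_notMem heM] at this
  omega

end Greedy

section SmallColors

variable [Fintype V] [DecidableEq C] {G : SimpleGraph V} [DecidableRel G.Adj]
  {c : Sym2 V → C} {k : ℕ}

variable (G c k) in
def smallColorsAt (v : V) : Finset C :=
  colorsAt G c v \ bigColors G c k

theorem card_colorClass_le_of_notMem_bigColors {γ : C} (h : γ ∉ bigColors G c k) :
    #(colorClass G c γ) ≤ 2 * k := by
  by_cases hγ : γ ∈ G.edgeFinset.image c
  · simp only [bigColors, mem_filter, hγ, true_and, not_le] at h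
    omega
  · rw [card_eq_zero.mpr (eq_empty_of_forall_notMem fun e he => hγ ?_)]
    · omega
    · obtain ⟨he', rfl⟩ := mem_colorClass.mp he
      exact mem_image_of_mem c (mem_edgeFinset.mpr he')

theorem degree_le_card_bigColors_add (hs : StronglyEdgeColored G c) (v : V) :
    G.degree v ≤ #(bigColors G c k) + #(smallColorsAt G c k v) := by
  rw [← card_colorsAt hs, add_comm]
  exact card_le_card_sdiff_add_card

theorem degree_add_degree_le_card_bigColors_add (hs : StronglyEdgeColored G c) {u v : V}
    (huv : G.Adj u v) : G.degree u + G.degree v ≤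
      #(bigColors G c k) + #(smallColorsAt G c k u) + #(smallColorsAt G c k v) + 1 := by
  calc G.degree u + G.degree v ≤ #(colorsAt G c u ∪ colorsAt G c v) + 1 :=
        degree_add_degree_le hs huv
    _ ≤ #((colorsAt G c u ∪ colorsAt G c v) \ bigColors G c k) + #(bigColors G c k) + 1 := by
        gcongr
        exact card_le_card_sdiff_add_card
    _ ≤ _ := by
        rw [union_sdiff_distrib]
        have := card_union_le (smallColorsAt G c k u) (smallColorsAt G c k v)
        unfold smallColorsAt at this ⊢
        omega

theorem card_smallColorsAt_le [DecidableEq V] {Q : Finset (Sym2 V)}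
    (hQmax : ∀ e ∈ G.edgeSet, c e ∉ bigColors G c k → (∀ v ∈ e, v ∉ vertsOf Q) →
      c e ∈ Q.image c) {u : V} (hu : u ∉ vertsOf Q) :
    #(smallColorsAt G c k u) ≤ #(colorsAt G c u ∩ Q.image c) + #{w ∈ vertsOf Q | G.Adj u w} := by
  calc #(smallColorsAt G c k u)
      ≤ #((colorsAt G c u ∩ Q.image c) ∪ {w ∈ vertsOf Q | G.Adj u w}.image fun w => c s(u, w)) :=
        card_le_card fun γ hγ => by
          obtain ⟨hγu, hγbig⟩ := mem_sdiff.mp hγ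
          obtain ⟨w, huw, rfl⟩ := mem_colorsAt.mp hγu
          by_cases hw : w ∈ vertsOf Q
          · exact mem_union_right _ (mem_image_of_mem _ (mem_filter.mpr ⟨hw, huw⟩))
          · refine mem_union_left _ (mem_inter.mpr ⟨hγu, hQmax _ huw hγbig fun v hv => ?_⟩)
            rcases Sym2.mem_iff.mp hv with rfl | rfl <;> assumption
    _ ≤ _ := (card_union_le _ _).trans (by gcongr; exact card_image_le)

end SmallColors

section Main

variable [Fintype V] [DecidableEq V] [DecidableEq C] {G : SimpleGraph V} [DecidableRel G.Adj]
  {c : Sym2 V → C} {k : ℕ} {Q : Finset (Sym2 V)}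

theorem sum_card_colorsAt_inter_le (Γ : Finset C) :
    ∑ u, #(colorsAt G c u ∩ Γ) ≤ ∑ γ ∈ Γ, 2 * #(colorClass G c γ) := by
  calc ∑ u, #(colorsAt G c u ∩ Γ) = ∑ γ ∈ Γ, #{u | γ ∈ colorsAt G c u} := by
        have := sum_card_bipartiteAbove_eq_sum_card_bipartiteBelow (s := univ) (t := Γ)
          fun u γ => γ ∈ colorsAt G c u
        simpa only [bipartiteAbove, bipartiteBelow, filter_mem_eq_inter, inter_comm] using this
    _ ≤ ∑ γ ∈ Γ, 2 * #(colorClass G c γ) := sum_le_sum fun γ _ => by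
        refine le_trans (card_le_card fun u hu => ?_) (card_vertsOf_le _)
        obtain ⟨w, huw, rfl⟩ := mem_colorsAt.mp (mem_filter.mp hu).2
        exact mem_vertsOf.mpr ⟨s(u, w), mem_colorClass.mpr ⟨huw, rfl⟩, Sym2.mem_mk_left _ _⟩

theorem degree_le_of_notMem_vertsOf (hs : StronglyEdgeColored G c)
    (hQmax : ∀ e ∈ G.edgeSet, c e ∉ bigColors G c k → (∀ v ∈ e, v ∉ vertsOf Q) →
      c e ∈ Q.image c)
    (hbq : #Q + #(bigColors G c k) < k) {u : V} (hu : u ∉ vertsOf Q) :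
    G.degree u ≤ 3 * k := by
  have := degree_le_card_bigColors_add (k := k) hs u
  have := card_smallColorsAt_le hQmax hu
  have := (card_le_card (inter_subset_right (s₁ := colorsAt G c u))).trans
    (card_image_le (s := Q) (f := c))
  have := card_filter_le (vertsOf Q) (fun w => G.Adj u w)
  have := card_vertsOf_le Q
  omega

theorem sum_card_smallColorsAt_le (hQsmall : ∀ e ∈ Q, c e ∉ bigColors G c k)
    (hQmax : ∀ e ∈ G.edgeSet, c e ∉ bigColors G c k → (∀ v ∈ e, v ∉ vertsOf Q) →
      c e ∈ Q.image c)
    {S : Finset V} (hS : Disjoint S (vertsOf Q)) :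
    ∑ u ∈ S, #(smallColorsAt G c k u) ≤ 4 * k * #Q + ∑ x ∈ vertsOf Q, G.degree x := by
  calc ∑ u ∈ S, #(smallColorsAt G c k u)
      ≤ ∑ u ∈ S, (#(colorsAt G c u ∩ Q.image c) + #{w ∈ vertsOf Q | G.Adj u w}) :=
        sum_le_sum fun u hu => card_smallColorsAt_le hQmax (disjoint_left.mp hS hu)
    _ ≤ ∑ u, (#(colorsAt G c u ∩ Q.image c) + #{w ∈ vertsOf Q | G.Adj u w}) :=
        sum_le_sum_of_subset (subset_univ S)
    _ ≤ ∑ γ ∈ Q.image c, 2 * #(colorClass G c γ) + ∑ x ∈ vertsOf Q, G.degree x := by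
        rw [sum_add_distrib, sum_card_filter_adj]
        exact Nat.add_le_add_right (sum_card_colorsAt_inter_le _) _
    _ ≤ 4 * k * #Q + ∑ x ∈ vertsOf Q, G.degree x := by
        gcongr
        refine (sum_le_card_nsmul _ _ (4 * k) fun γ hγ => ?_).trans ?_
        · obtain ⟨e, he, rfl⟩ := mem_image.mp hγ
          have := card_colorClass_le_of_notMem_bigColors (hQsmall e he)
          omega
        · rw [smul_eq_mul, mul_comm]
          exact Nat.mul_le_mul_left _ card_image_le

theorem eq_empty_of_maximal (hs : StronglyEdgeColored G c) (hkn : 500 * k ≤ Fintype.card V)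
    (hδ : ∀ v, k ≤ 2 * G.degree v) (hΔ : ∀ v, 1000 * G.degree v ≤ Fintype.card V)
    (hQsmall : ∀ e ∈ Q, c e ∉ bigColors G c k)
    (hQmax : ∀ e ∈ G.edgeSet, c e ∉ bigColors G c k → (∀ v ∈ e, v ∉ vertsOf Q) →
      c e ∈ Q.image c)
    (hbq : #Q + #(bigColors G c k) < k) : Q = ∅ := by
  set n := Fintype.card V
  set q := #Q
  set W := vertsOf Q
  set D := ∑ x ∈ W, G.degree x
  -- `X` meets every edge `uv`: there `k ≤ d(u) + d(v)` and `#Q + b < k` force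
  -- `q ≤ #(smallColorsAt u) + #(smallColorsAt v)`
  set X : Finset V := {u | q ≤ 2 * #(smallColorsAt G c k u)}
  have hcount : n * k ≤ 4 * ∑ x ∈ X, G.degree x := by
    refine card_mul_le_four_mul_sum_degree hδ fun u v huv => ?_
    have := degree_add_degree_le_card_bigColors_add (k := k) hs huv
    have := hδ u
    have := hδ v
    simp only [X, mem_filter, mem_univ, true_and]
    omega
  have hX : ∑ x ∈ X, G.degree x ≤ 3 * k * #(X \ W) + D :=
    calc ∑ x ∈ X, G.degree x ≤ ∑ x ∈ X \ W ∪ W, G.degree x :=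
          sum_le_sum_of_subset (by rw [sdiff_union_self_eq_union]; exact subset_union_left)
      _ = ∑ x ∈ X \ W, G.degree x + D := sum_union sdiff_disjoint
      _ ≤ 3 * k * #(X \ W) + D := by
          gcongr
          rw [mul_comm, ← smul_eq_mul]
          exact sum_le_card_nsmul _ _ _ fun u hu =>
            degree_le_of_notMem_vertsOf hs hQmax hbq (mem_sdiff.mp hu).2
  have hXW : q * #(X \ W) ≤ 2 * (4 * k * q + D) :=
    calc q * #(X \ W) = ∑ _u ∈ X \ W, q := by rw [sum_const, smul_eq_mul, mul_comm]
      _ ≤ ∑ u ∈ X \ W, 2 * #(smallColorsAt G c k u) := sum_le_sum fun u hu => by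
          simpa [X] using (mem_sdiff.mp hu).1
      _ ≤ 2 * (4 * k * q + D) := by
          rw [← mul_sum]
          exact Nat.mul_le_mul_left 2 (sum_card_smallColorsAt_le hQsmall hQmax sdiff_disjoint)
  have hD : 1000 * D ≤ 2 * q * n :=
    calc 1000 * D = ∑ x ∈ W, 1000 * G.degree x := mul_sum _ _ _
      _ ≤ #W * n := by rw [← smul_eq_mul]; exact sum_le_card_nsmul _ _ _ fun x _ => hΔ x
      _ ≤ 2 * q * n := by gcongr; exact card_vertsOf_le Q
  by_contra hQ
  have hq : 0 < q := card_pos.mpr (nonempty_iff_ne_empty.mpr hQ)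
  have hqnk : 0 < q * n * k := Nat.mul_pos (Nat.mul_pos hq (by omega)) (by omega)
  -- these combine to `1000 q n k ≤ 248 q n k`
  have h1 := Nat.mul_le_mul_left q hcount
  have h2 := Nat.mul_le_mul_left (4 * q) hX
  have h3 := Nat.mul_le_mul_left (12 * k) hXW
  have h4 := Nat.mul_le_mul_left (24 * k) hD
  have h5 := Nat.mul_le_mul_left (4 * q) hD
  have h6 := Nat.mul_le_mul_left (192 * k * q) hkn
  have h7 := Nat.mul_le_mul_left (8 * q * n) (show q ≤ k by omega)
  linarith

end Main

theorem card_image_edgeFinset_eq_sub_one [Fintype V] [DecidableEq V] [DecidableEq C]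
    {G : SimpleGraph V} [DecidableRel G.Adj] {c : Sym2 V → C} {k : ℕ}
    (hs : StronglyEdgeColored G c) (hkn : 500 * k ≤ Fintype.card V)
    (hδ : ∀ v, k ≤ 2 * G.degree v) (hΔ : ∀ v, 1000 * G.degree v ≤ Fintype.card V)
    (hNR : ¬HasRainbowMatching G c k) : #(G.edgeFinset.image c) = k - 1 := by
  obtain ⟨Q, hQ, hQsmall, hQmax⟩ :=
    exists_maximal_isRainbowMatching (G := G) (c := c) (· ∉ bigColors G c k)
  have hbq := hQ.card_add_card_bigColors_lt hs hNR hQsmall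
  have : Nonempty V := Fintype.card_pos_iff.mp (by omega)
  have hlow := le_card_image_edgeFinset_add_one hs hδ
  obtain rfl := eq_empty_of_maximal hs hkn hδ hΔ hQsmall hQmax hbq
  have hbig : G.edgeFinset.image c ⊆ bigColors G c k := fun γ hγ => by
    obtain ⟨e, he, rfl⟩ := mem_image.mp hγ
    by_contra h
    simpa using hQmax e (mem_edgeFinset.mp he) h (by simp)
  have := card_le_card hbig
  rw [card_empty] at hbq
  omega

theorem stmt_8 :
    ∃ ε : ℝ, 0 < ε ∧ ε < 1 ∧
      ∃ n0 : ℕ, ∀ (V C : Type) [Fintype V] (G : SimpleGraph V) [DecidableRel G.Adj]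
        (c : Sym2 V → C) (k : ℕ),
        n0 ≤ Fintype.card V → 0 < k → (k : ℝ) ≤ 2 * ε * Fintype.card V →
        StronglyEdgeColored G c →
        (∀ v : V, k ≤ 2 * G.degree v) →
        (∀ v : V, (G.degree v : ℝ) ≤ ε * Fintype.card V) →
        ¬HasRainbowMatching G c k →
        (c '' G.edgeSet).ncard = k - 1 := by
  classical
  refine ⟨1 / 1000, by norm_num, by norm_num, 0, fun V C _ G _ c k _ _ hk hs hδ hΔ hNR => ?_⟩
  rw [← coe_edgeFinset, ← coe_image, Set.ncard_coe_finset]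
  refine card_image_edgeFinset_eq_sub_one hs ?_ hδ (fun v => ?_) hNR
  · exact_mod_cast (by linarith : (500 * k : ℝ) ≤ Fintype.card V)
  · exact_mod_cast (by linarith [hΔ v] : (1000 * G.degree v : ℝ) ≤ Fintype.card V)
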